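/- arXiv:2402.18510 — 3 statements merged into one kernel-verified Lean document; each statement's English description precedes it below -/
import Mathlib

section
/- Let n ≥ 4, let x ∈ {0,1}^{n−2}, and let k ∈ {1,…,n−3}. Then the graph G_{x,k} is a tree if and only if x_k ≠ x_{k+1}. -/
open SimpleGraph Walk

lemma cycle_two_edges {V : Type*} [DecidableEq V] {G : SimpleGraph V} {v u : V} {c : G.Walk v v}
    (hc : c.IsCycle) (hu : u ∈ c.support) :
    ∃ b1 b2 : V, b1 ≠ b2 ∧ s(u, b1) ∈ c.edges ∧ s(u, b2) ∈ c.edges := by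
  have hc' : (c.rotate u hu).IsCycle := hc.rotate hu
  have hmem : ∀ e, e ∈ (c.rotate u hu).edges → e ∈ c.edges := fun e he =>
    (c.rotate_edges u hu).mem_iff.mp he
  obtain ⟨b, h, p, hp⟩ := Walk.not_nil_iff.mp hc'.not_nil
  rw [hp] at hc' hmem
  rw [Walk.cons_isCycle_iff] at hc'
  obtain ⟨hpath, hne⟩ := hc'
  have hpnil : ¬ p.Nil := by
    intro hnil
    have : b = u := hnil.eq
    subst this
    exact G.irrefl h
  have hrnil : ¬ p.reverse.Nil := by
    rwa [Walk.not_nil_iff_lt_length, Walk.length_reverse, ← Walk.not_nil_iff_lt_length]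
  obtain ⟨w2, h2, q, hq⟩ := Walk.not_nil_iff.mp hrnil
  have hw2 : s(u, w2) ∈ p.edges := by
    have : s(u, w2) ∈ p.reverse.edges := by rw [hq]; simp
    rwa [Walk.edges_reverse, List.mem_reverse] at this
  refine ⟨b, w2, ?_, hmem _ (by simp), hmem _ (by simp [hw2])⟩
  rintro rfl
  exact hne hw2

/-- The graph `G_{x,k}` on vertices `{1,…,n}` (0-indexed as `Fin n`):
each vertex `a ∈ {1,…,n−2}` is joined to hub `n−1` if `x_a = 0` and to hub `n`
if `x_a = 1`, and additionally vertices `k` and `k+1` are joined. -/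
def Gxk (n : ℕ) (x : Fin (n - 2) → Bool) (k : Fin (n - 3)) : SimpleGraph (Fin n) :=
  SimpleGraph.fromRel (fun u v =>
    (∃ a : Fin (n - 2), u.val = a.val ∧ v.val = (n - 2) + (if x a then 1 else 0)) ∨
    (u.val = k.val ∧ v.val = k.val + 1))

lemma Gxk_adj {n : ℕ} {x : Fin (n - 2) → Bool} {k : Fin (n - 3)} {u w : Fin n} :
    (Gxk n x k).Adj u w ↔ u ≠ w ∧
      ((∃ a : Fin (n - 2), u.val = a.val ∧ w.val = (n - 2) + (if x a then 1 else 0)) ∨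
       (u.val = k.val ∧ w.val = k.val + 1) ∨
       (∃ a : Fin (n - 2), w.val = a.val ∧ u.val = (n - 2) + (if x a then 1 else 0)) ∨
       (w.val = k.val ∧ u.val = k.val + 1)) := by
  rw [Gxk, SimpleGraph.fromRel_adj]
  constructor
  · rintro ⟨hne, (h | h) | (h | h)⟩
    exacts [⟨hne, Or.inl h⟩, ⟨hne, Or.inr (Or.inl h)⟩,
      ⟨hne, Or.inr (Or.inr (Or.inl h))⟩, ⟨hne, Or.inr (Or.inr (Or.inr h))⟩]
  · rintro ⟨hne, h | h | h | h⟩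
    exacts [⟨hne, Or.inl (Or.inl h)⟩, ⟨hne, Or.inl (Or.inr h)⟩,
      ⟨hne, Or.inr (Or.inl h)⟩, ⟨hne, Or.inr (Or.inr h)⟩]

/-- The hub vertex corresponding to a boolean. -/
def hubv (n : ℕ) (hn : 4 ≤ n) (b : Bool) : Fin n :=
  ⟨n - 2 + (if b then 1 else 0), by cases b <;> simp <;> omega⟩

lemma Gxk_adj_hub {n : ℕ} (hn : 4 ≤ n) (x : Fin (n - 2) → Bool) (k : Fin (n - 3))
    (a : Fin (n - 2)) :
    (Gxk n x k).Adj ⟨a.val, by have := a.isLt; omega⟩ (hubv n hn (x a)) := by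
  have ha := a.isLt
  rw [Gxk_adj]
  refine ⟨?_, Or.inl ⟨a, rfl, rfl⟩⟩
  intro hEq
  have h2 : a.val = n - 2 + (if x a then 1 else 0) := congrArg Fin.val hEq
  cases hxa : x a <;> simp [hxa] at h2 <;> omega

lemma Gxk_adj_k {n : ℕ} (hn : 4 ≤ n) (x : Fin (n - 2) → Bool) (k : Fin (n - 3)) :
    (Gxk n x k).Adj ⟨k.val, by have := k.isLt; omega⟩ ⟨k.val + 1, by have := k.isLt; omega⟩ := by
  rw [Gxk_adj]
  refine ⟨?_, Or.inr (Or.inl ⟨rfl, rfl⟩)⟩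
  intro hEq
  have h2 : k.val = k.val + 1 := congrArg Fin.val hEq
  omega

lemma Gxk_aux1 {n : ℕ} (hn : 4 ≤ n) (x : Fin (n - 2) → Bool) (k : Fin (n - 3))
    (k' k1' : Fin (n - 2)) (hk' : k'.val = k.val) (hk1' : k1'.val = k.val + 1)
    (heq : x k' = x k1') : ¬ (Gxk n x k).IsAcyclic := by
  intro hacyc
  have hk := k.isLt
  have hKV : k.val < n := by omega
  have hKV1 : k.val + 1 < n := by omega
  have hK2 : k.val < n - 2 := by omega
  have hK12 : k.val + 1 < n - 2 := by omega
  have e1 : k' = ⟨k.val, hK2⟩ := Fin.ext hk'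
  have e2 : k1' = ⟨k.val + 1, hK12⟩ := Fin.ext hk1'
  subst e1
  subst e2
  have hAval : (hubv n hn (x ⟨k.val, hK2⟩)).val
      = n - 2 + (if x ⟨k.val, hK2⟩ then 1 else 0) := rfl
  have hAbd : n - 2 ≤ (hubv n hn (x ⟨k.val, hK2⟩)).val := by
    rw [hAval]; split <;> omega
  have a1 : (Gxk n x k).Adj ⟨k.val, hKV⟩ ⟨k.val + 1, hKV1⟩ := Gxk_adj_k hn x k
  have a2 : (Gxk n x k).Adj ⟨k.val + 1, hKV1⟩ (hubv n hn (x ⟨k.val, hK2⟩)) := by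
    have h := Gxk_adj_hub hn x k ⟨k.val + 1, hK12⟩
    rw [← heq] at h
    exact h
  have a3 : (Gxk n x k).Adj (hubv n hn (x ⟨k.val, hK2⟩)) ⟨k.val, hKV⟩ :=
    (Gxk_adj_hub hn x k ⟨k.val, hK2⟩).symm
  have hne1 : (⟨k.val + 1, hKV1⟩ : Fin n) ≠ hubv n hn (x ⟨k.val, hK2⟩) := by
    intro h
    have h2 : k.val + 1 = (hubv n hn (x ⟨k.val, hK2⟩)).val := congrArg Fin.val h
    omega
  have hne2 : (⟨k.val + 1, hKV1⟩ : Fin n) ≠ ⟨k.val, hKV⟩ := by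
    intro h
    have h2 : k.val + 1 = k.val := congrArg Fin.val h
    omega
  have hne3 : hubv n hn (x ⟨k.val, hK2⟩) ≠ ⟨k.val, hKV⟩ := by
    intro h
    have h2 : (hubv n hn (x ⟨k.val, hK2⟩)).val = k.val := congrArg Fin.val h
    omega
  have hcyc : (Walk.cons a1 (Walk.cons a2 (Walk.cons a3 Walk.nil))).IsCycle := by
    rw [Walk.cons_isCycle_iff]
    refine ⟨?_, ?_⟩
    · rw [Walk.cons_isPath_iff]
      refine ⟨?_, ?_⟩
      · rw [Walk.cons_isPath_iff]
        refine ⟨Walk.IsPath.nil, ?_⟩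
        simp only [Walk.support_nil, List.mem_singleton]
        exact hne3
      · simp only [Walk.support_cons, Walk.support_nil, List.mem_cons,
          List.mem_singleton, List.not_mem_nil, or_false]
        rintro (h | h)
        · exact hne1 h
        · exact hne2 h
    · simp only [Walk.edges_cons, Walk.edges_nil, List.mem_cons, List.not_mem_nil, or_false]
      rintro (h | h)
      · rw [Sym2.eq_iff] at h
        rcases h with ⟨h1, h2⟩ | ⟨h1, h2⟩
        · exact hne1 h2
        · exact hne3 h1.symm
      · rw [Sym2.eq_iff] at h
        rcases h with ⟨h1, h2⟩ | ⟨h1, h2⟩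
        · exact hne2 h2
        · exact hne1 h2
  exact hacyc _ hcyc

lemma Gxk_aux2 {n : ℕ} (hn : 4 ≤ n) (x : Fin (n - 2) → Bool) (k : Fin (n - 3))
    (k' k1' : Fin (n - 2)) (hk' : k'.val = k.val) (hk1' : k1'.val = k.val + 1)
    (hne : x k' ≠ x k1') : (Gxk n x k).Connected := by
  have hk := k.isLt
  have hKV : k.val < n := by omega
  have hKV1 : k.val + 1 < n := by omega
  have hK2 : k.val < n - 2 := by omega
  have hK12 : k.val + 1 < n - 2 := by omega
  have e1 : k' = ⟨k.val, hK2⟩ := Fin.ext hk'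
  have e2 : k1' = ⟨k.val + 1, hK12⟩ := Fin.ext hk1'
  subst e1
  subst e2
  rw [SimpleGraph.connected_iff]
  have hub_reach : ∀ b : Bool, (Gxk n x k).Reachable (hubv n hn b) ⟨k.val, hKV⟩ := by
    intro b
    have hb : b = x ⟨k.val, hK2⟩ ∨ b = x ⟨k.val + 1, hK12⟩ := by
      cases b <;> cases h1 : x ⟨k.val, hK2⟩ <;> cases h2 : x ⟨k.val + 1, hK12⟩ <;> simp_all
    rcases hb with rfl | rfl
    · exact ((Gxk_adj_hub hn x k ⟨k.val, hK2⟩).symm).reachable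
    · exact ((Gxk_adj_hub hn x k ⟨k.val + 1, hK12⟩).symm).reachable.trans
        ((Gxk_adj_k hn x k).symm.reachable)
  have reach : ∀ v : Fin n, (Gxk n x k).Reachable v ⟨k.val, hKV⟩ := by
    intro v
    by_cases hv : v.val < n - 2
    · exact ((Gxk_adj_hub hn x k ⟨v.val, hv⟩).reachable).trans (hub_reach _)
    · have hvn := v.isLt
      have : v = hubv n hn false ∨ v = hubv n hn true := by
        rcases Nat.lt_or_ge v.val (n - 1) with h | h
        · left; apply Fin.ext
          show v.val = n - 2 + (if false then 1 else 0)
          simp; omega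
        · right; apply Fin.ext
          show v.val = n - 2 + (if true then 1 else 0)
          simp; omega
      rcases this with rfl | rfl <;> exact hub_reach _
  exact ⟨fun u v => (reach u).trans (reach v).symm, ⟨⟨k.val, hKV⟩⟩⟩

lemma Gxk_aux3 {n : ℕ} (hn : 4 ≤ n) (x : Fin (n - 2) → Bool) (k : Fin (n - 3))
    (k' k1' : Fin (n - 2)) (hk' : k'.val = k.val) (hk1' : k1'.val = k.val + 1)
    (hne : x k' ≠ x k1') : (Gxk n x k).IsAcyclic := by
  classical
  have hk := k.isLt
  have hKV : k.val < n := by omega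
  have hKV1 : k.val + 1 < n := by omega
  have hK2 : k.val < n - 2 := by omega
  have hK12 : k.val + 1 < n - 2 := by omega
  have e1 : k' = ⟨k.val, hK2⟩ := Fin.ext hk'
  have e2 : k1' = ⟨k.val + 1, hK12⟩ := Fin.ext hk1'
  subst e1
  subst e2
  have hAval : (hubv n hn (x ⟨k.val, hK2⟩)).val
      = n - 2 + (if x ⟨k.val, hK2⟩ then 1 else 0) := rfl
  have hAbd : n - 2 ≤ (hubv n hn (x ⟨k.val, hK2⟩)).val ∧
      (hubv n hn (x ⟨k.val, hK2⟩)).val < n := by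
    rw [hAval]; constructor <;> (split <;> omega)
  intro v c hcyc
  have nbr_leaf : ∀ (z w' : Fin n) (hz : z.val < n - 2), z.val ≠ k.val →
      z.val ≠ k.val + 1 → (Gxk n x k).Adj z w' → w' = hubv n hn (x ⟨z.val, hz⟩) := by
    intro z w' hz h1 h2 hadj
    rw [Gxk_adj] at hadj
    obtain ⟨-, h⟩ := hadj
    rcases h with ⟨a, ha1, ha2⟩ | ⟨ha1, -⟩ | ⟨a, ha1, ha2⟩ | ⟨-, ha2⟩
    · have haz : a = ⟨z.val, hz⟩ := Fin.ext ha1.symm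
      subst haz
      exact Fin.ext ha2
    · exact absurd ha1 h1
    · exfalso; cases hxa : x a <;> simp [hxa] at ha2 <;> omega
    · exact absurd ha2 h2
  have nbr_kv : ∀ w', (Gxk n x k).Adj ⟨k.val, hKV⟩ w' →
      w' = hubv n hn (x ⟨k.val, hK2⟩) ∨ w' = ⟨k.val + 1, hKV1⟩ := by
    intro w' hadj
    rw [Gxk_adj] at hadj
    obtain ⟨-, h⟩ := hadj
    rcases h with ⟨a, ha1, ha2⟩ | ⟨-, ha2⟩ | ⟨a, ha1, ha2⟩ | ⟨-, ha2⟩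
    · left
      have haz : a = ⟨k.val, hK2⟩ := Fin.ext ha1.symm
      subst haz
      exact Fin.ext ha2
    · right; exact Fin.ext ha2
    · exfalso
      have ha2' : k.val = n - 2 + (if x a then 1 else 0) := ha2
      cases hxa : x a <;> simp [hxa] at ha2' <;> omega
    · exfalso
      have ha2' : k.val = k.val + 1 := ha2
      omega
  have nbr_kv1 : ∀ w', (Gxk n x k).Adj ⟨k.val + 1, hKV1⟩ w' →
      w' = hubv n hn (x ⟨k.val + 1, hK12⟩) ∨ w' = ⟨k.val, hKV⟩ := by
    intro w' hadj
    rw [Gxk_adj] at hadj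
    obtain ⟨-, h⟩ := hadj
    rcases h with ⟨a, ha1, ha2⟩ | ⟨ha1, -⟩ | ⟨a, ha1, ha2⟩ | ⟨ha1, -⟩
    · left
      have haz : a = ⟨k.val + 1, hK12⟩ := Fin.ext ha1.symm
      subst haz
      exact Fin.ext ha2
    · exfalso
      have ha1' : k.val + 1 = k.val := ha1
      omega
    · exfalso
      have ha2' : k.val + 1 = n - 2 + (if x a then 1 else 0) := ha2
      cases hxa : x a <;> simp [hxa] at ha2' <;> omega
    · right; exact Fin.ext ha1
  have nbr_hub : ∀ w', (Gxk n x k).Adj (hubv n hn (x ⟨k.val, hK2⟩)) w' →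
      ∃ hw : w'.val < n - 2, x ⟨w'.val, hw⟩ = x ⟨k.val, hK2⟩ := by
    intro w' hadj
    rw [Gxk_adj] at hadj
    obtain ⟨-, h⟩ := hadj
    rcases h with ⟨a, ha1, ha2⟩ | ⟨ha1, -⟩ | ⟨a, ha1, ha2⟩ | ⟨ha1, ha2⟩
    · exfalso
      have := a.isLt
      have ha1' : (hubv n hn (x ⟨k.val, hK2⟩)).val = a.val := ha1
      omega
    · exfalso
      have ha1' : (hubv n hn (x ⟨k.val, hK2⟩)).val = k.val := ha1
      omega
    · have hw : w'.val < n - 2 := ha1 ▸ a.isLt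
      refine ⟨hw, ?_⟩
      have haz : a = ⟨w'.val, hw⟩ := Fin.ext ha1.symm
      subst haz
      have ha2' : (hubv n hn (x ⟨k.val, hK2⟩)).val
          = n - 2 + (if x ⟨w'.val, hw⟩ then 1 else 0) := ha2
      rw [hAval] at ha2'
      cases hxa : x ⟨w'.val, hw⟩ <;> cases hxk : x ⟨k.val, hK2⟩ <;>
        simp [hxa, hxk] at ha2' ⊢ <;> omega
    · exfalso
      have ha2' : (hubv n hn (x ⟨k.val, hK2⟩)).val = k.val + 1 := ha2
      omega
  obtain ⟨e, he⟩ : ∃ e, e ∈ c.edges := by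
    have h3 := hcyc.three_le_length
    have hlen : c.edges.length = c.length := c.length_edges
    cases hce : c.edges with
    | nil => rw [hce] at hlen; simp at hlen; omega
    | cons e t => exact ⟨e, by simp [hce]⟩
  obtain ⟨u0, w0, huw⟩ : ∃ u0 w0, s(u0, w0) ∈ c.edges := by
    revert he
    induction e using Sym2.ind with
    | _ u w => intro he; exact ⟨u, w, he⟩
  have hadj0 : (Gxk n x k).Adj u0 w0 := c.adj_of_mem_edges huw
  obtain ⟨z, hzs, hzlt⟩ : ∃ z ∈ c.support, z.val < n - 2 := by
    rw [Gxk_adj] at hadj0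
    obtain ⟨-, h⟩ := hadj0
    rcases h with ⟨a, ha1, -⟩ | ⟨ha1, -⟩ | ⟨a, ha1, -⟩ | ⟨ha1, -⟩
    · exact ⟨u0, c.fst_mem_support_of_mem_edges huw, ha1 ▸ a.isLt⟩
    · exact ⟨u0, c.fst_mem_support_of_mem_edges huw, by rw [ha1]; omega⟩
    · exact ⟨w0, c.snd_mem_support_of_mem_edges huw, ha1 ▸ a.isLt⟩
    · exact ⟨w0, c.snd_mem_support_of_mem_edges huw, by rw [ha1]; omega⟩
  have key : ∀ z' ∈ c.support, z'.val < n - 2 → z'.val = k.val ∨ z'.val = k.val + 1 := by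
    intro z' hz' hlt
    by_contra hcon
    push_neg at hcon
    obtain ⟨b1, b2, hb12, he1, he2⟩ := cycle_two_edges hcyc hz'
    have h1 := nbr_leaf z' b1 hlt hcon.1 hcon.2 (c.adj_of_mem_edges he1)
    have h2 := nbr_leaf z' b2 hlt hcon.1 hcon.2 (c.adj_of_mem_edges he2)
    exact hb12 (h1.trans h2.symm)
  have hkvs : (⟨k.val, hKV⟩ : Fin n) ∈ c.support := by
    rcases key z hzs hzlt with hz | hz
    · have hzz : z = ⟨k.val, hKV⟩ := Fin.ext hz
      rwa [← hzz]
    · have hzz : z = ⟨k.val + 1, hKV1⟩ := Fin.ext hz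
      rw [hzz] at hzs
      obtain ⟨b1, b2, hb12, he1, he2⟩ := cycle_two_edges hcyc hzs
      have h1 := nbr_kv1 b1 (c.adj_of_mem_edges he1)
      have h2 := nbr_kv1 b2 (c.adj_of_mem_edges he2)
      have hkedge : s((⟨k.val + 1, hKV1⟩ : Fin n), (⟨k.val, hKV⟩ : Fin n)) ∈ c.edges := by
        rcases h1 with rfl | rfl
        · rcases h2 with rfl | rfl
          · exact absurd rfl hb12
          · exact he2
        · exact he1
      exact c.snd_mem_support_of_mem_edges hkedge
  have hhubs : hubv n hn (x ⟨k.val, hK2⟩) ∈ c.support := by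
    obtain ⟨b1, b2, hb12, he1, he2⟩ := cycle_two_edges hcyc hkvs
    have h1 := nbr_kv b1 (c.adj_of_mem_edges he1)
    have h2 := nbr_kv b2 (c.adj_of_mem_edges he2)
    have hhedge : s((⟨k.val, hKV⟩ : Fin n), hubv n hn (x ⟨k.val, hK2⟩)) ∈ c.edges := by
      rcases h1 with rfl | rfl
      · exact he1
      · rcases h2 with rfl | rfl
        · exact he2
        · exact absurd rfl hb12
    exact c.snd_mem_support_of_mem_edges hhedge
  obtain ⟨b1, b2, hb12, he1, he2⟩ := cycle_two_edges hcyc hhubs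
  have hforce : ∀ b', s(hubv n hn (x ⟨k.val, hK2⟩), b') ∈ c.edges →
      b' = ⟨k.val, hKV⟩ := by
    intro b' heb
    obtain ⟨hw, hxw⟩ := nbr_hub b' (c.adj_of_mem_edges heb)
    rcases key b' (c.snd_mem_support_of_mem_edges heb) hw with h | h
    · exact Fin.ext h
    · exfalso
      have hbk : (⟨b'.val, hw⟩ : Fin (n - 2)) = ⟨k.val + 1, hK12⟩ := Fin.ext h
      rw [hbk] at hxw
      exact hne hxw.symm
  exact hb12 ((hforce b1 he1).trans (hforce b2 he2).symm)

/-- `G_{x,k}` is a tree iff `x_k ≠ x_{k+1}`. -/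
theorem Gxk_isTree_iff
    (n : ℕ) (hn : 4 ≤ n) (x : Fin (n - 2) → Bool) (k : Fin (n - 3)) :
    (Gxk n x k).IsTree ↔
      x ⟨k.val, by have := k.isLt; omega⟩ ≠ x ⟨k.val + 1, by have := k.isLt; omega⟩ := by
  constructor
  · intro htree heq
    exact Gxk_aux1 hn x k _ _ rfl rfl heq htree.IsAcyclic
  · intro hxy
    exact ⟨Gxk_aux2 hn x k _ _ rfl rfl hxy, Gxk_aux3 hn x k _ _ rfl rfl hxy⟩
end

section
/- Let c ≥ 2, m ≥ 1, and S be a finite set. Consider the alphabet consisting of key tokens key_1, …, key_m and value tokens val_0, val_1. For x ∈ {0,1}^m, let σ(x) be the sequence obtained by concatenating, for i = 1, …, m in order, (c−1) copies of key_i followed by the single token val_{x_i}. If there exist s₀ ∈ S, a transition function step : S × Σ → S, and ans : S → {1,…,m} → {0,1} such that for every x ∈ {0,1}^m, folding step over σ(x) from s₀ yields a state s(x) with ans(s(x))(q) = x_q for every q ∈ {1,…,m}, then |S| ≥ 2^m. Hence any streaming algorithm (in particular any RNN, even with chain-of-thought) solving c-gram retrieval on sequences of length cm requires at least m bits of memory.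 -/
/-- **c-gram retrieval, streaming/RNN memory lower bound.**
The alphabet is `Fin m ⊕ Bool` (key tokens `key_1, …, key_m` and value tokens
`val_0, val_1`); the input `σ(x)` concatenates, for each `i`, `c−1` copies of
`key_i` followed by `val_{x_i}`. Any streaming algorithm whose state after
reading `σ(x)` determines `x_q` for every query `q` must satisfy `|S| ≥ 2^m`. -/
theorem cgram_streaming_lower_bound
    (c m : ℕ) (hc : 2 ≤ c) (hm : 1 ≤ m) (S : Type*) [Fintype S]
    (s₀ : S) (step : S → (Fin m ⊕ Bool) → S) (ans : S → Fin m → Bool)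
    (h : ∀ (x : Fin m → Bool) (q : Fin m),
      ans (List.foldl step s₀
        (List.flatten (List.ofFn fun i : Fin m =>
          List.replicate (c - 1) (Sum.inl i) ++ [Sum.inr (x i)]))) q = x q) :
    2 ^ m ≤ Fintype.card S := by
  have hinj : Function.Injective (fun x : Fin m → Bool =>
      List.foldl step s₀
        (List.flatten (List.ofFn fun i : Fin m =>
          List.replicate (c - 1) (Sum.inl i) ++ [Sum.inr (x i)]))) := by
    intro x y hxy
    funext q
    rw [← h x q, ← h y q]
    simp only at hxy
    rw [hxy]
  calc 2 ^ m = Fintype.card (Fin m → Bool) := by simp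
    _ ≤ Fintype.card S := Fintype.card_le_of_injective _ hinj
end

section
/- Let B ≥ 1 and k ≥ 1 be integers, let d ≥ k, fix coordinates i₁, …, i_k ∈ {1,…,d}, and let F : {0,1,…,B}^k → ℝ be an arbitrary function. Then there exist a width w ≤ 4(B+1)^k and parameters W₁ ∈ ℝ^{w×d}, b₁ ∈ ℝ^w, w₃ ∈ ℝ^w, b₃ ∈ ℝ such that for every x ∈ ℝ^d whose coordinates x_{i₁}, …, x_{i_k} are integers in {0,1,…,B}, w₃ᵀ max(W₁x + b₁, 0) + b₃ = F(x_{i₁}, …, x_{i_k}); i.e., a one-layer ReLU feed-forward network of width O(B^k) exactly implements any lookup table whose keys are k-tuples of integers bounded by B. -/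
/-- Base-(B+1) codes of digit tuples are below (B+1)^k. -/
lemma relu_code_lt (B : ℕ) : ∀ (k : ℕ) (v : Fin k → Fin (B+1)),
    (∑ j, (v j : ℕ) * (B+1)^(j:ℕ)) < (B+1)^k := by
  intro k
  induction k with
  | zero => intro v; simp
  | succ k ih =>
    intro v
    rw [Fin.sum_univ_succ]
    have h1 : ∑ j : Fin k, (v j.succ : ℕ) * (B+1)^((j.succ : Fin (k+1)):ℕ)
        = (B+1) * ∑ j : Fin k, (v j.succ : ℕ) * (B+1)^(j:ℕ) := by
      rw [Finset.mul_sum]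
      refine Finset.sum_congr rfl fun j _ => ?_
      rw [Fin.val_succ, pow_succ]
      ring
    rw [h1]
    have h2 := ih (fun j => v j.succ)
    have h3 : (v 0 : ℕ) < B + 1 := (v 0).isLt
    have h4 : (v 0 : ℕ) * (B+1)^((0 : Fin (k+1)):ℕ) = (v 0 : ℕ) := by simp
    rw [h4]
    calc (v 0 : ℕ) + (B+1) * ∑ j : Fin k, (v j.succ : ℕ) * (B+1)^(j:ℕ)
        < (B+1) * (∑ j : Fin k, (v j.succ : ℕ) * (B+1)^(j:ℕ) + 1) := by
          rw [Nat.mul_add, Nat.mul_one]; omega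
      _ ≤ (B+1) * (B+1)^k := Nat.mul_le_mul_left _ (by omega)
      _ = (B+1)^(k+1) := by rw [pow_succ]; ring

/-- Digits can be recovered from the code. -/
lemma relu_code_digit (B : ℕ) : ∀ (k : ℕ) (v : Fin k → Fin (B+1)) (j : Fin k),
    (∑ j', (v j' : ℕ) * (B+1)^(j':ℕ)) / (B+1)^(j:ℕ) % (B+1) = v j := by
  intro k
  induction k with
  | zero => intro v j; exact absurd j.isLt (by omega)
  | succ k ih =>
    intro v j
    have hsum : (∑ j', (v j' : ℕ) * (B+1)^(j':ℕ))
        = (v 0 : ℕ) + (B+1) * ∑ j' : Fin k, (v j'.succ : ℕ) * (B+1)^(j':ℕ) := by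
      rw [Fin.sum_univ_succ]
      congr 1
      · simp
      · rw [Finset.mul_sum]
        refine Finset.sum_congr rfl fun j' _ => ?_
        rw [Fin.val_succ, pow_succ]
        ring
    rw [hsum]
    induction j using Fin.cases with
    | zero =>
      simp only [Fin.val_zero, pow_zero, Nat.div_one]
      rw [Nat.add_mul_mod_self_left]
      exact Nat.mod_eq_of_lt (v 0).isLt
    | succ j' =>
      rw [Fin.val_succ, pow_succ']
      rw [← Nat.div_div_eq_div_mul]
      have : ((v 0 : ℕ) + (B+1) * ∑ j' : Fin k, (v j'.succ : ℕ) * (B+1)^(j':ℕ)) / (B+1)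
          = ∑ j' : Fin k, (v j'.succ : ℕ) * (B+1)^(j':ℕ) := by
        rw [Nat.add_mul_div_left _ _ (by omega : 0 < B+1),
          Nat.div_eq_of_lt (v 0).isLt, Nat.zero_add]
      rw [this]
      exact ih (fun j => v j.succ) j'

/-- The ReLU hat-function identity at integer points. -/
lemma relu_triple (S n : ℕ) :
    max ((S:ℝ) - n + 1) 0 - 2 * max ((S:ℝ) - n) 0 + max ((S:ℝ) - n - 1) 0
      = if (n:ℕ) = S then 1 else 0 := by
  rcases lt_trichotomy S n with h | h | h
  · have hc : (S:ℝ) + 1 ≤ n := by exact_mod_cast Nat.succ_le_of_lt h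
    rw [if_neg (by omega), max_eq_right (by linarith), max_eq_right (by linarith),
      max_eq_right (by linarith)]
    ring
  · subst h
    rw [if_pos rfl]
    simp
  · have hc : (n:ℝ) + 1 ≤ S := by exact_mod_cast Nat.succ_le_of_lt h
    rw [if_neg (by omega), max_eq_left (by linarith), max_eq_left (by linarith),
      max_eq_left (by linarith)]
    ring

/-- **Lookup table by a one-layer ReLU network.**
For any function `F` on `k`-tuples of integers in `{0,…,B}`, there is a
one-layer ReLU feed-forward network of width at most `4(B+1)^k` that computes
`F(x_{i₁},…,x_{i_k})` exactly on every input whose selected coordinates are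
integers in `{0,…,B}`. -/
theorem relu_lookup_table
    (B k d : ℕ) (hB : 1 ≤ B) (hk : 1 ≤ k) (hd : k ≤ d)
    (i : Fin k → Fin d) (F : (Fin k → Fin (B + 1)) → ℝ) :
    ∃ w : ℕ, w ≤ 4 * (B + 1) ^ k ∧
      ∃ (W₁ : Matrix (Fin w) (Fin d) ℝ) (b₁ w₃ : Fin w → ℝ) (b₃ : ℝ),
        ∀ (v : Fin k → Fin (B + 1)) (x : Fin d → ℝ),
          (∀ j : Fin k, x (i j) = ((v j : ℕ) : ℝ)) →
          (∑ l : Fin w, w₃ l * max ((W₁.mulVec x + b₁) l) 0) + b₃ = F v := by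
  classical
  set N : ℕ := (B+1)^k with hNdef
  have hN0 : 0 < N := pow_pos (by omega) k
  refine ⟨N * 3, by omega, ?_⟩
  set c : Fin 3 → ℝ := ![1, -2, 1] with hc
  set e : Fin N × Fin 3 ≃ Fin (N * 3) := finProdFinEquiv with he
  set dec : Fin N → (Fin k → Fin (B+1)) := fun n j =>
    ⟨(n:ℕ) / (B+1)^(j:ℕ) % (B+1), Nat.mod_lt _ (by omega)⟩ with hdec
  set W₁ : Matrix (Fin (N*3)) (Fin d) ℝ :=
    fun _ p => ∑ j : Fin k, if i j = p then ((B:ℝ)+1)^(j:ℕ) else 0 with hW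
  set b₁ : Fin (N*3) → ℝ :=
    fun l => 1 - (((e.symm l).1 : ℕ) : ℝ) - (((e.symm l).2 : ℕ) : ℝ) with hb
  set w₃ : Fin (N*3) → ℝ :=
    fun l => F (dec (e.symm l).1) * c (e.symm l).2 with hw3
  refine ⟨W₁, b₁, w₃, 0, ?_⟩
  intro v x hx
  set S : ℕ := ∑ j, (v j : ℕ) * (B+1)^(j:ℕ) with hSdef
  have hS : S < N := relu_code_lt B k v
  have hmv : ∀ l, W₁.mulVec x l = (S:ℝ) := by
    intro l
    rw [Matrix.mulVec, dotProduct]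
    calc ∑ p, W₁ l p * x p
        = ∑ p, ∑ j, (if i j = p then ((B:ℝ)+1)^(j:ℕ) * x p else 0) := by
          refine Finset.sum_congr rfl fun p _ => ?_
          rw [hW, Finset.sum_mul]
          refine Finset.sum_congr rfl fun j _ => ?_
          split <;> simp
      _ = ∑ j, ∑ p, (if i j = p then ((B:ℝ)+1)^(j:ℕ) * x p else 0) :=
          Finset.sum_comm
      _ = ∑ j : Fin k, ((B:ℝ)+1)^(j:ℕ) * x (i j) := by
          refine Finset.sum_congr rfl fun j _ => ?_
          rw [Finset.sum_ite_eq]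
          simp
      _ = (S:ℝ) := by
          rw [hSdef]
          push_cast
          refine Finset.sum_congr rfl fun j _ => ?_
          rw [hx j]
          ring
  calc (∑ l, w₃ l * max ((W₁.mulVec x + b₁) l) 0) + 0
      = ∑ l : Fin (N*3), (fun q : Fin N × Fin 3 =>
          F (dec q.1) * c q.2 *
            max ((S:ℝ) + (1 - ((q.1 : ℕ) : ℝ) - ((q.2 : ℕ) : ℝ))) 0) (e.symm l) := by
        rw [add_zero]
        refine Finset.sum_congr rfl fun l _ => ?_
        simp only [Pi.add_apply, hmv l, hw3, hb]
    _ = ∑ q : Fin N × Fin 3, F (dec q.1) * c q.2 *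
          max ((S:ℝ) + (1 - ((q.1 : ℕ) : ℝ) - ((q.2 : ℕ) : ℝ))) 0 :=
        Fintype.sum_equiv e.symm _ _ (fun l => rfl)
    _ = ∑ n : Fin N, F (dec n) *
          ∑ r : Fin 3, c r * max ((S:ℝ) + (1 - ((n : ℕ) : ℝ) - ((r : ℕ) : ℝ))) 0 := by
        rw [Fintype.sum_prod_type]
        refine Finset.sum_congr rfl fun n _ => ?_
        rw [Finset.mul_sum]
        refine Finset.sum_congr rfl fun r _ => ?_
        ring
    _ = ∑ n : Fin N, F (dec n) * (if n = (⟨S, hS⟩ : Fin N) then 1 else 0) := by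
        refine Finset.sum_congr rfl fun n _ => ?_
        congr 1
        have ht := relu_triple S (n : ℕ)
        have hcond : ((n : ℕ) = S) = (n = (⟨S, hS⟩ : Fin N)) := by
          simp [Fin.ext_iff]
        rw [Fin.sum_univ_three, hc]
        have h0 : (((0 : Fin 3) : ℕ) : ℝ) = 0 := by norm_num
        have h1 : (((1 : Fin 3) : ℕ) : ℝ) = 1 := by norm_num
        have h2 : (((2 : Fin 3) : ℕ) : ℝ) = 2 := by norm_num
        simp only [Matrix.cons_val_zero, Matrix.cons_val_one, Matrix.head_cons,
          Matrix.cons_val_two, Matrix.tail_cons, h0, h1, h2]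
        simp only [← hcond]
        rw [← ht]
        ring_nf
    _ = F (dec ⟨S, hS⟩) := by
        rw [Finset.sum_congr rfl (fun n _ => mul_ite_zero ..)]
        · simp
    _ = F v := by
        congr 1
        funext j
        exact Fin.ext (relu_code_digit B k v j)
end
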